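/- Let d, n ≥ 1, α ∈ (0,1), and let s : X_NA × ℝ → ℝ be measurable. On a common probability space, let (X̂^1, Y^1), …, (X̂^n, Y^n) be i.i.d. with law Q on ℝ^d × ℝ, and let (X^{n+1}, M^{n+1}, Y^{n+1}), taking values in ℝ^d × {0,1}^d × ℝ, be independent of them. Let P_{XY} denote the law of (X^{n+1}, Y^{n+1}). Fix m ∈ {0,1}^d with P(M^{n+1} = m) > 0, and let P^m_{XY} denote the conditional law of (X^{n+1}, Y^{n+1}) given {M^{n+1} = m}; note P^m_{XY} is automatically absolutely continuous with respect to P_{XY}. Define the calibration scores S^i := s(mask(X̂^i, m), Y^i) for i ≤ n, the quantile q̂ := Quantile_{1−α}( (Σ_{i=1}^n δ_{S^i} + δ_{+∞})/(n+1) ), and the split conformal set Ĉ(x̃) := { y ∈ ℝ : s(x̃, y) ≤ q̂ }. Then P( Y^{n+1} ∈ Ĉ(mask(X^{n+1}, M^{n+1})) | M^{n+1} = m ) ≥ 1 − α − ( d_TV(P_{XY}, Q) + E_{(x,y) ∼ P_{XY}}[ | (dP^m_{XY}/dP_{XY})(x,y) − 1 | ] ). Moreover, if (X^{n+1}, Y^{n+1})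 is independent of M^{n+1} (the MCAR case), then P( Y^{n+1} ∈ Ĉ(mask(X^{n+1}, M^{n+1})) | M^{n+1} = m ) ≥ 1 − α − d_TV(P_{XY}, Q). -/

import Mathlib

open MeasureTheory ProbabilityTheory
open scoped ENNReal

universe u

instance optionMeasurableSpace {α : Type u} [MeasurableSpace α] : MeasurableSpace (Option α) :=
  MeasurableSpace.comap (Equiv.optionEquivSumPUnit.{0, u} α) inferInstance

noncomputable def wQuantile {ι : Type*} [Fintype ι] (β : ℝ) (w : ι → ℝ) (v : ι → EReal) : EReal :=
  sInf {z : EReal | ∃ r : ℝ, z = (r : EReal) ∧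
    β ≤ ∑ i ∈ Finset.univ.filter (fun i => v i ≤ (r : EReal)), w i}

noncomputable def tvDist {Z : Type*} [MeasurableSpace Z] (P Q : Measure Z) : ℝ :=
  ⨆ A : {A : Set Z // MeasurableSet A}, |(P A.1).toReal - (Q A.1).toReal|

def maskOp {d : ℕ} (x : Fin d → ℝ) (m : Fin d → Bool) : Fin d → Option ℝ :=
  fun j => if m j then none else some (x j)

noncomputable def splitQuantile {n : ℕ} (β : ℝ) (sc : Fin n → ℝ) : EReal :=
  wQuantile β (fun _ : Option (Fin n) => 1 / (n + 1 : ℝ))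
    (fun i => i.elim (⊤ : EReal) (fun j => ((sc j : ℝ) : EReal)))

/-!
Conditionally on `{M = m}`, the calibration sample is still i.i.d. `Q` and independent of the test
pair, whose law becomes `P^m_XY`; so the conditional coverage is `(Qⁿ ⊗ P^m_XY)(E)` for the split
conformal event `E` of the score `s (mask · m, ·)`. The test point is covered exactly when fewer
than `(1 - α)(n + 1)` calibration scores lie strictly below its own, so under `Qⁿ ⊗ Q`
exchangeability of the `n + 1` points gives coverage at least `1 - α`. Replacing `Q` by `P^m_XY`
moves every section of `E` by at most `d_TV(P_XY, Q) + ‖dP^m_XY/dP_XY - 1‖_{L¹(P_XY)}`, and under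
MCAR `P^m_XY = P_XY`, so only the total variation term remains.
-/

open Filter Topology
open scoped Finset

theorem measurable_optionSome {α : Type u} [MeasurableSpace α] :
    Measurable (Option.some : α → Option α) := by
  rintro _ ⟨u, hu, rfl⟩
  exact measurable_inl hu

theorem measurable_maskOp {d : ℕ} (m : Fin d → Bool) :
    Measurable fun x : Fin d → ℝ => maskOp x m :=
  measurable_pi_lambda _ fun j => by
    unfold maskOp
    split
    · exact measurable_const
    · exact measurable_optionSome.comp (measurable_pi_apply j)

theorem le_splitQuantile_iff {n : ℕ} {β y : ℝ} {sc : Fin n → ℝ} :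
    (y : EReal) ≤ splitQuantile β sc ↔ (#{i | sc i < y} : ℝ) < β * (n + 1) := by
  have hmass : ∀ r : ℝ, (β ≤ ∑ i ∈ Finset.univ.filter (fun i : Option (Fin n) =>
      i.elim (⊤ : EReal) (fun j => (sc j : EReal)) ≤ (r : EReal)), 1 / (n + 1 : ℝ)) ↔
      β * (n + 1) ≤ #{i | sc i ≤ r} := by
    intro r
    rw [Finset.sum_const, nsmul_eq_mul, ← div_eq_mul_one_div, le_div_iff₀ (by positivity),
      Finset.card_filter, Fintype.sum_option, Finset.card_filter]
    simp
  simp only [splitQuantile, wQuantile, le_sInf_iff, Set.mem_ofPred_eq, forall_exists_index,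
    and_imp]
  constructor
  · intro h
    by_contra! hle
    have hr : ∀ᶠ r in 𝓝[<] y, ∀ i, sc i < y → sc i ≤ r :=
      eventually_all.2 fun i => by
        by_cases hi : sc i < y
        · filter_upwards [Ioo_mem_nhdsLT hi] with r hr using fun _ => hr.1.le
        · exact Eventually.of_forall fun _ h => absurd h hi
    obtain ⟨r, hr, hry⟩ := (hr.and self_mem_nhdsWithin).exists
    have hcard : #{i | sc i < y} ≤ #{i | sc i ≤ r} :=
      Finset.card_le_card fun i => by simpa using hr i
    have := h r r rfl ((hmass r).2 (hle.trans (by exact_mod_cast hcard)))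
    exact absurd (EReal.coe_le_coe_iff.1 this) (not_le.2 hry)
  · rintro h _ r rfl hr
    rw [hmass] at hr
    by_contra! hry
    have hcard : #{i | sc i ≤ r} ≤ #{i | sc i < (y : ℝ)} :=
      Finset.card_le_card fun i => by
        simpa using fun hi : sc i ≤ r => hi.trans_lt (EReal.coe_lt_coe_iff.1 hry)
    linarith [(Nat.cast_le (α := ℝ)).2 hcard]

def strictRank {ι α : Type*} [Fintype ι] [LinearOrder α] (t : ι → α) (j : ι) : ℕ :=
  #{i | t i < t j}

theorem strictRank_comp_perm {ι α : Type*} [Fintype ι] [LinearOrder α] (t : ι → α)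
    (σ : Equiv.Perm ι) (j : ι) : strictRank (t ∘ σ) j = strictRank t (σ j) :=
  Finset.card_equiv σ (by simp)

theorem le_card_strictRank_lt {ι α : Type*} [Fintype ι] [LinearOrder α] (t : ι → α) {k : ℕ}
    (hk : k ≤ Fintype.card ι) : k ≤ #{j | strictRank t j < k} := by
  classical
  set A : Finset ι := {j | strictRank t j < k}
  rcases Aᶜ.eq_empty_or_nonempty with hA | hA
  · rwa [(Finset.compl_eq_empty_iff A).1 hA, Finset.card_univ]
  obtain ⟨j₀, hj₀, hmin⟩ := Aᶜ.exists_min_image t hA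
  have hbelow : ({i | t i < t j₀} : Finset ι) ⊆ A := fun i hi => by
    by_contra hiA
    exact absurd (hmin i (Finset.mem_compl.2 hiA)) (not_le.2 (Finset.mem_filter.1 hi).2)
  calc k ≤ strictRank t j₀ := by simpa [A] using hj₀
    _ ≤ #A := Finset.card_le_card hbelow

theorem natCast_le_sum_measure {X ι : Type*} [MeasurableSpace X] [Fintype ι] {P : Measure X}
    [IsProbabilityMeasure P] {G : ι → Set X} [∀ x, DecidablePred fun j => x ∈ G j]
    (hG : ∀ j, MeasurableSet (G j)) {k : ℕ} (hk : ∀ x, k ≤ #{j | x ∈ G j}) :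
    (k : ℝ≥0∞) ≤ ∑ j, P (G j) :=
  calc (k : ℝ≥0∞) = ∫⁻ _, (k : ℝ≥0∞) ∂P := by simp
    _ ≤ ∫⁻ x, ∑ j, (G j).indicator 1 x ∂P := lintegral_mono fun x => by
        simpa [Set.indicator_apply, Finset.sum_boole] using hk x
    _ = ∑ j, P (G j) := by
        rw [lintegral_finsetSum _ fun j _ => measurable_one.indicator (hG j)]
        exact Finset.sum_congr rfl fun j _ => lintegral_indicator_one (hG j)

theorem measure_pi_strictRank_lt_eq {ι Z α : Type*} [Fintype ι] [DecidableEq ι]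
    [MeasurableSpace Z] [LinearOrder α] (Q : Measure Z) [SigmaFinite Q] (score : Z → α) (k : ℕ)
    (i j : ι) :
    Measure.pi (fun _ : ι => Q) {f | strictRank (score ∘ f) i < k} =
      Measure.pi (fun _ : ι => Q) {f | strictRank (score ∘ f) j < k} := by
  set σ := Equiv.swap i j
  have hσ : MeasurePreserving (MeasurableEquiv.arrowCongr' σ (MeasurableEquiv.refl Z))
      (Measure.pi fun _ => Q) (Measure.pi fun _ => Q) :=
    measurePreserving_arrowCongr' _ _ σ _ fun _ => MeasurePreserving.id Q
  rw [← hσ.measure_preimage_equiv]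
  congr 1
  ext f
  change strictRank (score ∘ f ∘ σ.symm) i < k ↔ _
  rw [← Function.comp_assoc, strictRank_comp_perm]
  simp [σ]

theorem measurable_card_filter {X ι : Type*} [MeasurableSpace X] [Fintype ι] {p : ι → X → Prop}
    [∀ i x, Decidable (p i x)] (hp : ∀ i, MeasurableSet {x | p i x}) :
    Measurable fun x => #{i | p i x} := by
  simp_rw [Finset.card_filter]
  exact Finset.measurable_sum _ fun i _ => Measurable.ite (hp i) measurable_const measurable_const

def coverageEvent {Z : Type*} (n : ℕ) (β : ℝ) (score : Z → ℝ) : Set ((Fin n → Z) × Z) :=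
  {p | (score p.2 : EReal) ≤ splitQuantile β fun i => score (p.1 i)}

section Coverage

variable {Z : Type*} {n : ℕ} {β : ℝ} {score : Z → ℝ}

theorem coverageEvent_eq :
    coverageEvent n β score = {p | (#{i | score (p.1 i) < score p.2} : ℝ) < β * (n + 1)} :=
  Set.ext fun _ => le_splitQuantile_iff

theorem measurableSet_coverageEvent [MeasurableSpace Z] (hscore : Measurable score) :
    MeasurableSet (coverageEvent n β score) := by
  rw [coverageEvent_eq]
  refine measurableSet_lt (measurable_from_nat.comp (measurable_card_filter fun i => ?_))
    measurable_const
  exact measurableSet_lt (hscore.comp ((measurable_pi_apply i).comp measurable_fst))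
    (hscore.comp measurable_snd)

theorem measurableSet_strictRank_lt [MeasurableSpace Z] (hscore : Measurable score) (j : Fin n)
    (k : ℕ) :
    MeasurableSet {f : Fin n → Z | strictRank (score ∘ f) j < k} :=
  measurableSet_lt (measurable_card_filter
    (p := fun i (f : Fin n → Z) => score (f i) < score (f j)) fun i => measurableSet_lt
      (hscore.comp (measurable_pi_apply i)) (hscore.comp (measurable_pi_apply j)))
    measurable_const

theorem measure_prod_coverageEvent_eq [MeasurableSpace Z] (Q : Measure Z) [SigmaFinite Q]
    (hscore : Measurable score) :
    ((Measure.pi fun _ : Fin n => Q).prod Q) (coverageEvent n β score) =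
      Measure.pi (fun _ : Fin (n + 1) => Q) {f | strictRank (score ∘ f) 0 < ⌈β * (n + 1)⌉₊} := by
  rw [← Measure.prod_swap, Measure.map_apply measurable_swap (measurableSet_coverageEvent hscore),
    ← (measurePreserving_piFinSuccAbove (fun _ : Fin (n + 1) => Q) 0).measure_preimage_equiv]
  congr 1
  ext f
  simp [coverageEvent_eq, strictRank, Fin.card_filter_univ_succ, Nat.lt_ceil, Fin.tail]

-- At least `k` of the `n + 1` points have strict rank below `k`, and by exchangeability the test
-- point (index `0`) is each of them with the same probability.
theorem le_measureReal_prod_coverageEvent [MeasurableSpace Z] (Q : Measure Z)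
    [IsProbabilityMeasure Q] (hscore : Measurable score) (hβ : β ≤ 1) :
    β ≤ ((Measure.pi fun _ : Fin n => Q).prod Q).real (coverageEvent n β score) := by
  set k := ⌈β * (n + 1)⌉₊
  set P := Measure.pi fun _ : Fin (n + 1) => Q
  have hk : k ≤ n + 1 := Nat.ceil_le.2 (by push_cast; nlinarith)
  have hsum : (k : ℝ≥0∞) ≤ ((n + 1 : ℕ) : ℝ≥0∞) * P {f | strictRank (score ∘ f) 0 < k} := by
    have := natCast_le_sum_measure (P := P) (fun j => measurableSet_strictRank_lt hscore j k)
      fun f => le_card_strictRank_lt (score ∘ f) (by simpa using hk)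
    rwa [Finset.sum_congr rfl fun j _ => measure_pi_strictRank_lt_eq Q score k j 0,
      Finset.sum_const, Finset.card_univ, Fintype.card_fin, nsmul_eq_mul] at this
  have hsum' : (k : ℝ) ≤ (n + 1) * P.real {f | strictRank (score ∘ f) 0 < k} := by
    have := ENNReal.toReal_mono (by finiteness) hsum
    rwa [ENNReal.toReal_mul, ENNReal.toReal_natCast, ENNReal.toReal_natCast, Nat.cast_succ]
      at this
  rw [measureReal_def, measure_prod_coverageEvent_eq Q hscore, ← measureReal_def]
  nlinarith [Nat.le_ceil (β * (n + 1))]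

end Coverage

theorem abs_measureReal_sub_le_tvDist {Z : Type*} [MeasurableSpace Z] (P Q : Measure Z)
    [IsFiniteMeasure P] [IsFiniteMeasure Q] {A : Set Z} (hA : MeasurableSet A) :
    |P.real A - Q.real A| ≤ tvDist P Q := by
  refine le_ciSup (f := fun A : {A : Set Z // MeasurableSet A} => |P.real A - Q.real A|)
    ⟨P.real Set.univ + Q.real Set.univ, ?_⟩ ⟨A, hA⟩
  rintro _ ⟨B, rfl⟩
  refine (abs_sub _ _).trans ?_
  simp only [abs_of_nonneg measureReal_nonneg]
  exact add_le_add (measureReal_mono (Set.subset_univ _)) (measureReal_mono (Set.subset_univ _))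

theorem abs_measureReal_sub_le_integral_abs_rnDeriv_sub_one {α : Type*} [MeasurableSpace α]
    {μ ν : Measure α} [IsFiniteMeasure μ] [IsFiniteMeasure ν] (hμν : μ ≪ ν) (A : Set α) :
    |μ.real A - ν.real A| ≤ ∫ x, |(μ.rnDeriv ν x).toReal - 1| ∂ν := by
  have hint : Integrable (fun x => (μ.rnDeriv ν x).toReal - 1) ν :=
    Measure.integrable_toReal_rnDeriv.sub (integrable_const 1)
  have hdiff : μ.real A - ν.real A = ∫ x in A, ((μ.rnDeriv ν x).toReal - 1) ∂ν := by
    rw [integral_sub Measure.integrable_toReal_rnDeriv.integrableOn (integrable_const 1),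
      Measure.setIntegral_toReal_rnDeriv hμν, setIntegral_const, smul_eq_mul, mul_one]
  rw [hdiff]
  exact abs_integral_le_integral_abs.trans
    (setIntegral_le_integral hint.abs (Eventually.of_forall fun _ => abs_nonneg _))

theorem measureReal_prod_eq_integral {X Y : Type*} [MeasurableSpace X] [MeasurableSpace Y]
    (ν : Measure X) [SFinite ν] (R : Measure Y) [IsFiniteMeasure R] {E : Set (X × Y)}
    (hE : MeasurableSet E) : (ν.prod R).real E = ∫ x, R.real (Prod.mk x ⁻¹' E) ∂ν := by
  rw [measureReal_def, Measure.prod_apply hE, ← integral_toReal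
    (measurable_measure_prodMk_left hE).aemeasurable (Eventually.of_forall fun _ => by finiteness)]
  rfl

theorem abs_measureReal_prod_sub_le {X Y : Type*} [MeasurableSpace X] [MeasurableSpace Y]
    (ν : Measure X) [IsProbabilityMeasure ν] {R R' : Measure Y} [IsFiniteMeasure R]
    [IsFiniteMeasure R'] {δ : ℝ} (h : ∀ A, MeasurableSet A → |R.real A - R'.real A| ≤ δ)
    {E : Set (X × Y)} (hE : MeasurableSet E) :
    |(ν.prod R).real E - (ν.prod R').real E| ≤ δ := by
  rw [measureReal_prod_eq_integral ν R hE, measureReal_prod_eq_integral ν R' hE,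
    ← integral_sub (Measure.integrable_measure_prodMk_left hE (by finiteness))
      (Measure.integrable_measure_prodMk_left hE (by finiteness))]
  simpa using norm_integral_le_of_norm_le_const (μ := ν)
    (Eventually.of_forall fun x => (Real.norm_eq_abs _).trans_le (h _ (measurable_prodMk_left hE)))

theorem sub_le_measureReal_prod_coverageEvent {Z : Type*} [MeasurableSpace Z] {n : ℕ} {β δ : ℝ}
    {score : Z → ℝ} (Q R : Measure Z) [IsProbabilityMeasure Q] [IsFiniteMeasure R]
    (hscore : Measurable score) (hβ : β ≤ 1)
    (hRQ : ∀ A, MeasurableSet A → |R.real A - Q.real A| ≤ δ) :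
    β - δ ≤ ((Measure.pi fun _ : Fin n => Q).prod R).real (coverageEvent n β score) := by
  have hcov := le_measureReal_prod_coverageEvent (n := n) Q hscore hβ
  have hclose := abs_measureReal_prod_sub_le (Measure.pi fun _ : Fin n => Q) hRQ
    (measurableSet_coverageEvent (n := n) (β := β) hscore)
  linarith [abs_le.1 hclose]

section Conditioning

variable {Ω β γ : Type*} [MeasurableSpace Ω] [MeasurableSpace β] [MeasurableSpace γ]
  {μ : Measure Ω} {V : Ω → β} {W : Ω → γ} {S : Set γ}

theorem ProbabilityTheory.IndepFun.cond_inter_preimage (h : V ⟂ᵢ[μ] W) (hW : Measurable W)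
    (hS : MeasurableSet S) {A : Set β} {T : Set γ} (hA : MeasurableSet A) (hT : MeasurableSet T) :
    μ[V ⁻¹' A ∩ W ⁻¹' T | W ⁻¹' S] = μ (V ⁻¹' A) * μ[W ⁻¹' T | W ⁻¹' S] := by
  have hinter : W ⁻¹' S ∩ (V ⁻¹' A ∩ W ⁻¹' T) = V ⁻¹' A ∩ W ⁻¹' (S ∩ T) := by
    rw [Set.preimage_inter, Set.inter_left_comm]
  rw [cond_apply (hW hS), cond_apply (hW hS), hinter,
    h.measure_inter_preimage_eq_mul _ _ hA (hS.inter hT), Set.preimage_inter]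
  ring

theorem ProbabilityTheory.IndepFun.cond_preimage_left [IsFiniteMeasure μ] (h : V ⟂ᵢ[μ] W)
    (hW : Measurable W) (hS : MeasurableSet S) (hμS : μ (W ⁻¹' S) ≠ 0) {A : Set β}
    (hA : MeasurableSet A) : μ[V ⁻¹' A | W ⁻¹' S] = μ (V ⁻¹' A) := by
  have := cond_isProbabilityMeasure hμS
  simpa using h.cond_inter_preimage hW hS hA MeasurableSet.univ

theorem ProbabilityTheory.IndepFun.map_cond_eq [IsFiniteMeasure μ] (h : V ⟂ᵢ[μ] W)
    (hV : Measurable V) (hW : Measurable W) (hS : MeasurableSet S) (hμS : μ (W ⁻¹' S) ≠ 0) :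
    (μ[|W ⁻¹' S]).map V = μ.map V :=
  Measure.ext fun A hA => by
    rw [Measure.map_apply hV hA, Measure.map_apply hV hA, h.cond_preimage_left hW hS hμS hA]

theorem ProbabilityTheory.IndepFun.cond [IsFiniteMeasure μ] (h : V ⟂ᵢ[μ] W) (hW : Measurable W)
    (hS : MeasurableSet S) (hμS : μ (W ⁻¹' S) ≠ 0) : V ⟂ᵢ[μ[|W ⁻¹' S]] W := by
  rw [indepFun_iff_measure_inter_preimage_eq_mul]
  intro A T hA hT
  rw [h.cond_inter_preimage hW hS hA hT, h.cond_preimage_left hW hS hμS hA]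

theorem ProbabilityTheory.IndepFun.map_prod_cond_eq {δ : Type*} [MeasurableSpace δ]
    [IsFiniteMeasure μ] (h : V ⟂ᵢ[μ] W) (hV : Measurable V) (hW : Measurable W) {g : γ → δ}
    (hg : Measurable g) (hS : MeasurableSet S) (hμS : μ (W ⁻¹' S) ≠ 0) :
    (μ[|W ⁻¹' S]).map (fun ω => (V ω, g (W ω))) =
      (μ.map V).prod ((μ[|W ⁻¹' S]).map (fun ω => g (W ω))) := by
  rw [← h.map_cond_eq hV hW hS hμS]
  exact (indepFun_iff_map_prod_eq_prod_map_map hV.aemeasurable (hg.comp hW).aemeasurable).1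
    ((h.cond hW hS hμS).comp measurable_id hg)

end Conditioning

theorem split_conformal_impute_mask_coverage_bound_general
    (d n : ℕ) (α : ℝ) (hα : α ∈ Set.Ioo (0 : ℝ) 1)
    (s : (Fin d → Option ℝ) × ℝ → ℝ) (hs : Measurable s)
    (Q : Measure ((Fin d → ℝ) × ℝ)) [IsProbabilityMeasure Q]
    {Ω : Type*} [MeasurableSpace Ω] (μ : Measure Ω) [IsProbabilityMeasure μ]
    (XY : Fin n → Ω → (Fin d → ℝ) × ℝ) (hXYmeas : ∀ i, Measurable (XY i))
    (hXYiid : iIndepFun XY μ)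
    (hXYlaw : ∀ i, Measure.map (XY i) μ = Q)
    (Xt : Ω → Fin d → ℝ) (Mt : Ω → Fin d → Bool) (Yt : Ω → ℝ)
    (hXt : Measurable Xt) (hMt : Measurable Mt) (hYt : Measurable Yt)
    (hindep : IndepFun (fun x => fun i => XY i x) (fun x => (Xt x, Mt x, Yt x)) μ)
    (m : Fin d → Bool) (hm : μ {x | Mt x = m} ≠ 0)
    (Pxy : Measure ((Fin d → ℝ) × ℝ))
    (hPxy : Pxy = Measure.map (fun x => (Xt x, Yt x)) μ)
    (Pmxy : Measure ((Fin d → ℝ) × ℝ))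
    (hPmxy : Pmxy = Measure.map (fun x => (Xt x, Yt x)) (μ[|{x | Mt x = m}])) :
    (1 - α - (tvDist Pxy Q + ∫ z, |(Pmxy.rnDeriv Pxy z).toReal - 1| ∂Pxy) ≤
      ((μ[|{x | Mt x = m}]) {x | ((s (maskOp (Xt x) (Mt x), Yt x) : ℝ) : EReal) ≤
        splitQuantile (1 - α)
          (fun i : Fin n => s (maskOp (XY i x).1 m, (XY i x).2))}).toReal) ∧
    (IndepFun (fun x => (Xt x, Yt x)) Mt μ →
      1 - α - tvDist Pxy Q ≤
        ((μ[|{x | Mt x = m}]) {x | ((s (maskOp (Xt x) (Mt x), Yt x) : ℝ) : EReal) ≤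
          splitQuantile (1 - α)
            (fun i : Fin n => s (maskOp (XY i x).1 m, (XY i x).2))}).toReal) := by
  set score : (Fin d → ℝ) × ℝ → ℝ := fun z => s (maskOp z.1 m, z.2)
  have hscore : Measurable score :=
    hs.comp (((measurable_maskOp m).comp measurable_fst).prodMk measurable_snd)
  have hB : MeasurableSet {x | Mt x = m} := hMt (measurableSet_singleton m)
  have htest : Measurable fun x => (Xt x, Yt x) := hXt.prodMk hYt
  have : IsFiniteMeasure Pxy := hPxy ▸ inferInstance
  have : IsFiniteMeasure Pmxy := hPmxy ▸ inferInstance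
  -- On `{Mt = m}` the test point is masked by `m`, like the calibration points.
  have hevent : {x | Mt x = m} ∩ {x | ((s (maskOp (Xt x) (Mt x), Yt x) : ℝ) : EReal) ≤
      splitQuantile (1 - α) (fun i : Fin n => s (maskOp (XY i x).1 m, (XY i x).2))} =
      {x | Mt x = m} ∩ (fun x => (fun i => XY i x, (Xt x, Yt x))) ⁻¹'
        coverageEvent n (1 - α) score :=
    Set.ext fun x => and_congr_right fun hx => by rw [Set.mem_ofPred_eq, show Mt x = m from hx]; rfl
  have hcal : μ.map (fun x i => XY i x) = Measure.pi fun _ => Q := by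
    rw [hXYiid.map_fun_eq_pi_map fun i => (hXYmeas i).aemeasurable]
    simp_rw [hXYlaw]
  have hlaw : (μ[|{x | Mt x = m}]).map (fun x => (fun i => XY i x, (Xt x, Yt x))) =
      (Measure.pi fun _ => Q).prod Pmxy := by
    rw [← hcal, hPmxy]
    exact hindep.map_prod_cond_eq (S := {p : (Fin d → ℝ) × (Fin d → Bool) × ℝ | p.2.1 = m})
      (measurable_pi_lambda _ hXYmeas) (hXt.prodMk (hMt.prodMk hYt))
      (measurable_fst.prodMk (measurable_snd.comp measurable_snd))
      (measurable_fst.comp measurable_snd (measurableSet_singleton m)) hm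
  rw [← cond_inter_self hB, hevent, cond_inter_self hB,
    ← Measure.map_apply (by fun_prop) (measurableSet_coverageEvent hscore), hlaw]
  have h1α : 1 - α ≤ 1 := by linarith [hα.1]
  refine ⟨sub_le_measureReal_prod_coverageEvent _ _ hscore h1α fun A hA => ?_,
    fun hMCAR => sub_le_measureReal_prod_coverageEvent _ _ hscore h1α fun A hA => ?_⟩
  · have hac : Pmxy ≪ Pxy := hPmxy ▸ hPxy ▸ cond_absolutelyContinuous.map htest
    linarith [abs_sub_le (Pmxy.real A) (Pxy.real A) (Q.real A),
      abs_measureReal_sub_le_integral_abs_rnDeriv_sub_one hac A,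
      abs_measureReal_sub_le_tvDist Pxy Q hA]
  · rw [hPmxy, show {x | Mt x = m} = Mt ⁻¹' {m} from rfl,
      hMCAR.map_cond_eq htest hMt (measurableSet_singleton m) hm, ← hPxy]
    exact abs_measureReal_sub_le_tvDist Pxy Q hA

/-- Coverage bound for split conformal after impute-then-mask.
With calibration pairs i.i.d. `~ Q` and test triple independent of them, the split conformal
set built on the masked calibration scores has mask-conditional coverage at least
`1 - α - (d_TV(P_XY, Q) + E_{P_XY}|dP^m_XY/dP_XY - 1|)`; and at least `1 - α - d_TV(P_XY, Q)`
if `(X^{n+1}, Y^{n+1})` is independent of `M^{n+1}` (MCAR). -/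
theorem split_conformal_impute_mask_coverage_bound
    (d n : ℕ) (hd : 1 ≤ d) (hn : 1 ≤ n) (α : ℝ) (hα : α ∈ Set.Ioo (0 : ℝ) 1)
    (s : (Fin d → Option ℝ) × ℝ → ℝ) (hs : Measurable s)
    (Q : Measure ((Fin d → ℝ) × ℝ)) [IsProbabilityMeasure Q]
    {Ω : Type*} [MeasurableSpace Ω] (μ : Measure Ω) [IsProbabilityMeasure μ]
    (XY : Fin n → Ω → (Fin d → ℝ) × ℝ) (hXYmeas : ∀ i, Measurable (XY i))
    (hXYiid : iIndepFun XY μ)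
    (hXYlaw : ∀ i, Measure.map (XY i) μ = Q)
    (Xt : Ω → Fin d → ℝ) (Mt : Ω → Fin d → Bool) (Yt : Ω → ℝ)
    (hXt : Measurable Xt) (hMt : Measurable Mt) (hYt : Measurable Yt)
    (hindep : IndepFun (fun x => fun i => XY i x) (fun x => (Xt x, Mt x, Yt x)) μ)
    (m : Fin d → Bool) (hm : μ {x | Mt x = m} ≠ 0)
    (Pxy : Measure ((Fin d → ℝ) × ℝ))
    (hPxy : Pxy = Measure.map (fun x => (Xt x, Yt x)) μ)
    (Pmxy : Measure ((Fin d → ℝ) × ℝ))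
    (hPmxy : Pmxy = Measure.map (fun x => (Xt x, Yt x)) (μ[|{x | Mt x = m}])) :
    (1 - α - (tvDist Pxy Q + ∫ z, |(Pmxy.rnDeriv Pxy z).toReal - 1| ∂Pxy) ≤
      ((μ[|{x | Mt x = m}]) {x | ((s (maskOp (Xt x) (Mt x), Yt x) : ℝ) : EReal) ≤
        splitQuantile (1 - α)
          (fun i : Fin n => s (maskOp (XY i x).1 m, (XY i x).2))}).toReal) ∧
    (IndepFun (fun x => (Xt x, Yt x)) Mt μ →
      1 - α - tvDist Pxy Q ≤
        ((μ[|{x | Mt x = m}]) {x | ((s (maskOp (Xt x) (Mt x), Yt x) : ℝ) : EReal) ≤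
          splitQuantile (1 - α)
            (fun i : Fin n => s (maskOp (XY i x).1 m, (XY i x).2))}).toReal) :=
  split_conformal_impute_mask_coverage_bound_general d n α hα s hs Q μ XY hXYmeas hXYiid hXYlaw Xt
    Mt Yt hXt hMt hYt hindep m hm Pxy hPxy Pmxy hPmxy
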